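/- arXiv:1106.3063 — 2 statements merged into one kernel-verified Lean document; each statement's English description precedes it below -/
import Mathlib

section
/- Let j, k ≥ 0 be even integers and l ≥ 1 an odd integer with k + l ≥ 3, and let n = j + k + l. Let (a_1, …, a_n) be a sequence of nonnegative integers such that a_i = 0 for 1 ≤ i ≤ j; a_i is positive and even for j+1 ≤ i ≤ j+k, with these entries nondecreasing; and a_i is positive and odd for j+k+1 ≤ i ≤ n, with these entries nondecreasing. Then the rooted tree RT(a_1, …, a_n) is super edge-graceful. -/
/-- Edge type of the rooted tree `RT(a₀, …, a_{n-1})`: one edge from the root to each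
child `i` (`Sum.inl i`), and one edge from child `i` to each of its `a i` leaf children
(`Sum.inr ⟨i, m⟩`).  The number of edges is `q = n + ∑ i, a i`. -/
abbrev RTEdge (n : ℕ) (a : Fin n → ℕ) := (Fin n) ⊕ (Σ i : Fin n, Fin (a i))

/-- Vertex type of the rooted tree `RT(a₀, …, a_{n-1})`: the root (`none`), the children
`some (.inl i)` of the root, and the leaves `some (.inr ⟨i, m⟩)` attached to child `i`.
The number of vertices is `p = q + 1`. -/
abbrev RTVertex (n : ℕ) (a : Fin n → ℕ) := Option (RTEdge n a)

/-- The vertex labeling induced by an edge labeling `f`: each vertex gets the sum of the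
labels of the edges incident with it. -/
def vertexSum {n : ℕ} (a : Fin n → ℕ) (f : RTEdge n a → ℤ) : RTVertex n a → ℤ
  | none => ∑ i : Fin n, f (Sum.inl i)
  | some (Sum.inl i) => f (Sum.inl i) + ∑ m : Fin (a i), f (Sum.inr ⟨i, m⟩)
  | some (Sum.inr ⟨i, m⟩) => f (Sum.inr ⟨i, m⟩)

/-- The target label set for `q` objects: `{0, ±1, …, ±(q-1)/2}` if `q` is odd, and
`{±1, …, ±(q/2)}` if `q` is even. -/
noncomputable def segSet (q : ℕ) : Finset ℤ :=
  if q % 2 = 0 then (Finset.Icc (-((q / 2 : ℕ) : ℤ)) ((q / 2 : ℕ) : ℤ)).erase 0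
  else Finset.Icc (-((q / 2 : ℕ) : ℤ)) ((q / 2 : ℕ) : ℤ)

/-- The rooted tree `RT(a₀, …, a_{n-1})` is super edge-graceful: there is an edge
labeling which is a bijection onto `{0, ±1, …, ±(q-1)/2}` (`q` odd) resp.
`{±1, …, ±(q/2)}` (`q` even) whose induced vertex labeling is a bijection onto
`{0, ±1, …, ±(p-1)/2}` (`p` odd) resp. `{±1, …, ±(p/2)}` (`p` even), where
`q = n + ∑ i, a i` and `p = q + 1`. -/
def IsSEG {n : ℕ} (a : Fin n → ℕ) : Prop :=
  ∃ f : RTEdge n a → ℤ,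
    Set.BijOn f Set.univ ↑(segSet (n + ∑ i, a i)) ∧
    Set.BijOn (vertexSum a f) Set.univ ↑(segSet (n + ∑ i, a i + 1))

/-- The sequence `(0^j, a, b)` of length `j + 2`. -/
def seq2 (j a b : ℕ) : Fin (j + 2) → ℕ :=
  fun i => if (i : ℕ) < j then 0 else if (i : ℕ) = j then a else b

/-!
Let the first `e` children of the root have an even number of leaves and the last `l = 2h + 1`
an odd number. Apart from `2l` small labels, the edge labels come in pairs `±x`: the edges
from the root to the first `e` children and the first `2⌊aᵢ/2⌋` leaves of every child get
`±(l+1), ±(l+2), …` in consecutive pairs. So every such block of leaves sums to `0`, the root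
edges of the first `e` children sum to `0`, and every vertex other than the root and the last
`l` children keeps the label of its edge towards the root. The small labels `±1, …, ±l` go to
the root edges of the last `l` children and to their unpaired leaves, arranged so that these
root edges sum to `l`, the root's label, and the vertex sums of those children are `0` and the
odd numbers of absolute value below `l`: exactly the values in `[-l, l]` left over by the root
and the unpaired leaves. Both labelings are injective, so counting gives the bijections.
-/

open Function Finset

lemma card_segSet (q : ℕ) : #(segSet q) = q := by
  unfold segSet
  split_ifs
  · rw [card_erase_of_mem (by simp; omega), Int.card_Icc]; omega
  · rw [Int.card_Icc]; omega

lemma mem_segSet_two_mul {M : ℕ} {x : ℤ} : x ∈ segSet (2 * M) ↔ x ≠ 0 ∧ |x| ≤ M := by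
  simp [segSet, abs_le]

lemma mem_segSet_two_mul_add_one {M : ℕ} {x : ℤ} : x ∈ segSet (2 * M + 1) ↔ |x| ≤ M := by
  simp [segSet, abs_le, show (2 * M + 1) / 2 = M by omega, show (2 * M + 1) % 2 = 1 by omega]

lemma bijOn_segSet_of_injective {α : Type*} [Fintype α] {f : α → ℤ} {q : ℕ}
    (hq : Fintype.card α = q) (hf : Injective f) (hmaps : ∀ x, f x ∈ segSet q) :
    Set.BijOn f Set.univ (segSet q) := by
  refine ⟨fun x _ => hmaps x, hf.injOn, ?_⟩
  have himage : univ.image f = segSet q :=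
    eq_of_subset_of_card_le (by simpa [subset_iff] using hmaps)
      (by rw [card_segSet, card_image_of_injective _ hf, card_univ, hq])
  intro y hy
  obtain ⟨x, -, rfl⟩ := mem_image.mp (himage ▸ hy)
  exact ⟨x, trivial, rfl⟩

lemma Function.Injective.sumElim_of_abs {α β : Type*} {f : α → ℤ} {g : β → ℤ} {b : ℤ}
    (hf : Injective f) (hg : Injective g) (hfb : ∀ x, |f x| ≤ b) (hgb : ∀ y, b < |g y|) :
    Injective (Sum.elim f g) :=
  hf.sumElim hg fun x y hxy => by have := hfb x; have := hgb y; rw [hxy] at *; linarith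

def altSign (t : ℕ) (x : ℤ) : ℤ := if t % 2 = 0 then x else -x

lemma sum_range_two_mul_altSign (g : ℕ → ℤ) (c : ℕ) :
    ∑ t ∈ range (2 * c), altSign t (g (t / 2)) = 0 := by
  induction c with
  | zero => simp
  | succ c ih =>
    rw [show 2 * (c + 1) = 2 * c + 1 + 1 by ring, sum_range_succ, sum_range_succ, ih,
      show (2 * c + 1) / 2 = c by omega, show 2 * c / 2 = c by omega]
    simp [altSign, Nat.add_mod]

def pairedLabel (b t : ℕ) : ℤ := altSign t ((b + t / 2 + 1 : ℕ) : ℤ)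

lemma pairedLabel_injective (b : ℕ) : Injective (pairedLabel b) := by
  intro t t' h
  simp only [pairedLabel, altSign] at h
  split_ifs at h <;> omega

lemma abs_pairedLabel (b t : ℕ) : |pairedLabel b t| = ((b + t / 2 + 1 : ℕ) : ℤ) := by
  unfold pairedLabel altSign
  split_ifs <;> simp only [abs_neg, Nat.abs_cast]

lemma pairedLabel_two_mul_add (b N t : ℕ) :
    pairedLabel b (2 * N + t) = pairedLabel (b + N) t := by
  simp only [pairedLabel, altSign]
  split_ifs <;> omega

lemma sum_range_two_mul_pairedLabel (b c : ℕ) : ∑ t ∈ range (2 * c), pairedLabel b t = 0 :=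
  sum_range_two_mul_altSign (fun u => ((b + u + 1 : ℕ) : ℤ)) c

/- For the `m`-th child with an odd number of leaves, `oddEdgeLabel` labels its edge to the root
and `oddLeafLabel` its unpaired leaf. The edge labels are `2h+1` and `±1, ±3, …, ±(2h-1)`,
the leaf labels `-(2h+1)` and `±2, …, ±2h`, and the vertex sums `0` and the odd numbers of
absolute value below `2h`. -/
def oddEdgeLabel (h : ℕ) (m : Fin (2 * h + 1)) : ℤ :=
  if (m : ℕ) = 0 then 2 * h + 1 else altSign (m - 1) ((2 * ((m - 1) / 2) + 1 : ℕ) : ℤ)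

def oddLeafLabel (h : ℕ) (m : Fin (2 * h + 1)) : ℤ :=
  if (m : ℕ) = 0 then -(2 * h + 1) else altSign (m - 1) ((2 * ((m - 1) / 2) : ℕ) - 2 * h)

def smallEdgeLabel (h : ℕ) : Fin (2 * h + 1) ⊕ Fin (2 * h + 1) → ℤ :=
  Sum.elim (oddEdgeLabel h) (oddLeafLabel h)

def smallVertexLabel (h : ℕ) : Option (Fin (2 * h + 1) ⊕ Fin (2 * h + 1)) → ℤ :=
  fun o => o.elim (2 * h + 1) (Sum.elim (oddEdgeLabel h + oddLeafLabel h) (oddLeafLabel h))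

lemma smallEdgeLabel_injective (h : ℕ) : Injective (smallEdgeLabel h) := by
  rintro (m | m) (m' | m') hm <;>
    simp only [smallEdgeLabel, Sum.elim_inl, Sum.elim_inr, oddEdgeLabel, oddLeafLabel,
      altSign] at hm <;> (try simp only [Sum.inl.injEq, Sum.inr.injEq, Fin.ext_iff]) <;>
    split_ifs at hm <;> omega

lemma smallEdgeLabel_ne_zero (h : ℕ) (s) : smallEdgeLabel h s ≠ 0 := by
  rcases s with m | m <;> simp only [smallEdgeLabel, Sum.elim_inl, Sum.elim_inr, oddEdgeLabel,
    oddLeafLabel, altSign] <;> have := m.isLt <;> split_ifs <;> omega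

lemma abs_smallEdgeLabel_le (h : ℕ) (s) : |smallEdgeLabel h s| ≤ 2 * h + 1 := by
  rw [abs_le]
  rcases s with m | m <;> simp only [smallEdgeLabel, Sum.elim_inl, Sum.elim_inr, oddEdgeLabel,
    oddLeafLabel, altSign] <;> have := m.isLt <;> split_ifs <;> omega

lemma smallVertexLabel_injective (h : ℕ) : Injective (smallVertexLabel h) := by
  rintro (_ | m | m) (_ | m' | m') hm <;>
    simp only [smallVertexLabel, Option.elim_none, Option.elim_some, Sum.elim_inl, Sum.elim_inr,
      Pi.add_apply, oddEdgeLabel, oddLeafLabel, altSign] at hm <;>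
    (try simp only [Option.some.injEq, Sum.inl.injEq, Sum.inr.injEq, Fin.ext_iff]) <;>
    (try have := m.isLt) <;> (try have := m'.isLt) <;> split_ifs at hm <;> omega

lemma abs_smallVertexLabel_le (h : ℕ) (o) : |smallVertexLabel h o| ≤ 2 * h + 1 := by
  rw [abs_le]
  rcases o with _ | m | m <;> simp only [smallVertexLabel, Option.elim_none, Option.elim_some,
    Sum.elim_inl, Sum.elim_inr, Pi.add_apply, oddEdgeLabel, oddLeafLabel, altSign] <;>
    (try have := m.isLt) <;> (try split_ifs) <;> omega

lemma sum_oddEdgeLabel (h : ℕ) : ∑ m, oddEdgeLabel h m = 2 * h + 1 := by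
  have hsucc (t : Fin (2 * h)) :
      oddEdgeLabel h t.succ = altSign t ((2 * (t / 2) + 1 : ℕ) : ℤ) := by
    simp [oddEdgeLabel]
  rw [Fin.sum_univ_succ, Fintype.sum_congr _ _ hsucc,
    Fin.sum_univ_eq_sum_range (fun t => altSign t ((2 * (t / 2) + 1 : ℕ) : ℤ)),
    sum_range_two_mul_altSign (fun u => ((2 * u + 1 : ℕ) : ℤ))]
  simp [oddEdgeLabel]

section Slots

variable (h L : ℕ)

def slotLabel : (Fin (2 * h + 1) ⊕ Fin (2 * h + 1)) ⊕ Fin L → ℤ :=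
  Sum.elim (smallEdgeLabel h) (fun t => pairedLabel (2 * h + 1) t)

def vertexSlotLabel : Option (Fin (2 * h + 1) ⊕ Fin (2 * h + 1)) ⊕ Fin L → ℤ :=
  Sum.elim (smallVertexLabel h) (fun t => pairedLabel (2 * h + 1) t)

lemma lt_abs_pairedLabel (t : ℕ) : (2 * h + 1 : ℤ) < |pairedLabel (2 * h + 1) t| := by
  rw [abs_pairedLabel]; omega

lemma slotLabel_injective : Injective (slotLabel h L) :=
  (smallEdgeLabel_injective h).sumElim_of_abs
    ((pairedLabel_injective _).comp Fin.val_injective) (abs_smallEdgeLabel_le h)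
    (fun t => lt_abs_pairedLabel h t)

lemma vertexSlotLabel_injective : Injective (vertexSlotLabel h L) :=
  (smallVertexLabel_injective h).sumElim_of_abs
    ((pairedLabel_injective _).comp Fin.val_injective) (abs_smallVertexLabel_le h)
    (fun t => lt_abs_pairedLabel h t)

variable {L}

lemma abs_pairedLabel_le_of_lt {t L' : ℕ} (ht : t < L' + L') :
    |pairedLabel (2 * h + 1) t| ≤ ((2 * h + 1 + L' : ℕ) : ℤ) := by
  rw [abs_pairedLabel]; omega

lemma slotLabel_mem_segSet (hL : Even L) (s) :
    slotLabel h L s ∈ segSet (2 * (2 * h + 1) + L) := by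
  obtain ⟨L', rfl⟩ := hL
  rw [show 2 * (2 * h + 1) + (L' + L') = 2 * (2 * h + 1 + L') by ring, mem_segSet_two_mul]
  rcases s with s | t
  · exact ⟨smallEdgeLabel_ne_zero h s, (abs_smallEdgeLabel_le h s).trans (by push_cast; omega)⟩
  · exact ⟨abs_pos.mp ((by positivity : (0 : ℤ) < 2 * h + 1).trans (lt_abs_pairedLabel h t)),
      abs_pairedLabel_le_of_lt h t.isLt⟩

lemma vertexSlotLabel_mem_segSet (hL : Even L) (s) :
    vertexSlotLabel h L s ∈ segSet (2 * (2 * h + 1) + L + 1) := by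
  obtain ⟨L', rfl⟩ := hL
  rw [show 2 * (2 * h + 1) + (L' + L') = 2 * (2 * h + 1 + L') by ring, mem_segSet_two_mul_add_one]
  rcases s with o | t
  · exact (abs_smallVertexLabel_le h o).trans (by push_cast; omega)
  · exact abs_pairedLabel_le_of_lt h t.isLt

end Slots

abbrev pairedLeafCount {n : ℕ} (a : Fin n → ℕ) : ℕ := ∑ i, 2 * (a i / 2)

section Tree

variable {e h : ℕ} (a : Fin (e + (2 * h + 1)) → ℕ)

/- The first `2 * (a i / 2)` leaves of child `i` are paired; the paired leaves of all children
are numbered consecutively, after the `e` edges from the root to the first `e` children.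
A remaining leaf of child `i ≥ e` is its unpaired leaf. -/
def leafSlot (i : Fin (e + (2 * h + 1))) (r : ℕ) :
    (Fin (2 * h + 1) ⊕ Fin (2 * h + 1)) ⊕ Fin (e + pairedLeafCount a) :=
  if hr : r < 2 * (a i / 2) then
    .inr (Fin.natAdd e (finSigmaFinEquiv (n := fun i => 2 * (a i / 2)) ⟨i, r, hr⟩))
  else .inl (.inr ⟨i - e, by omega⟩)

def rootEdgeSlot : Fin (e + (2 * h + 1)) →
    (Fin (2 * h + 1) ⊕ Fin (2 * h + 1)) ⊕ Fin (e + pairedLeafCount a) :=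
  Fin.addCases (fun i => .inr (Fin.castAdd _ i)) (fun m => .inl (.inl m))

def edgeSlot : RTEdge (e + (2 * h + 1)) a →
    (Fin (2 * h + 1) ⊕ Fin (2 * h + 1)) ⊕ Fin (e + pairedLeafCount a) :=
  Sum.elim (rootEdgeSlot a) (fun x => leafSlot a x.1 x.2)

def vertexSlot (v : RTVertex (e + (2 * h + 1)) a) :
    Option (Fin (2 * h + 1) ⊕ Fin (2 * h + 1)) ⊕ Fin (e + pairedLeafCount a) :=
  v.elim (.inl none) (Sum.map some id ∘ edgeSlot a)

variable {a}

lemma sum_eq_pairedLeafCount_add (hev : ∀ i : Fin (e + (2 * h + 1)), (i : ℕ) < e → Even (a i))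
    (hod : ∀ i : Fin (e + (2 * h + 1)), e ≤ (i : ℕ) → Odd (a i)) :
    ∑ i, a i = pairedLeafCount a + (2 * h + 1) := by
  have heven (i : Fin e) : a (Fin.castAdd _ i) = 2 * (a (Fin.castAdd _ i) / 2) :=
    (Nat.two_mul_div_two_of_even (hev _ (by simp))).symm
  have hodd (m : Fin (2 * h + 1)) : a (Fin.natAdd e m) = 2 * (a (Fin.natAdd e m) / 2) + 1 :=
    (Nat.two_mul_div_two_add_one_of_odd (hod _ (by simp))).symm
  rw [Fin.sum_univ_add, Fintype.sum_congr _ _ heven, Fintype.sum_congr _ _ hodd, sum_add_distrib,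
    pairedLeafCount, Fin.sum_univ_add (f := fun i => 2 * (a i / 2))]
  simp only [sum_const, card_univ, Fintype.card_fin, smul_eq_mul, mul_one]
  ring

lemma sum_slotLabel_leafSlot_eq_zero (he : Even e) (i : Fin (e + (2 * h + 1))) :
    ∑ r ∈ range (2 * (a i / 2)), slotLabel h _ (leafSlot a i r) = 0 := by
  obtain ⟨e', rfl⟩ := he
  set B := ∑ k : Fin i, a (Fin.castLE i.2.le k) / 2
  have hpaired : ∀ r ∈ range (2 * (a i / 2)),
      slotLabel h _ (leafSlot a i r) = pairedLabel (2 * h + 1 + (e' + B)) r := by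
    intro r hr
    rw [mem_range] at hr
    have hindex :
        (finSigmaFinEquiv (n := fun i => 2 * (a i / 2)) ⟨i, r, hr⟩ : ℕ) = 2 * B + r := by
      rw [finSigmaFinEquiv_apply, mul_sum]
    rw [leafSlot, dif_pos hr, ← pairedLabel_two_mul_add, slotLabel, Sum.elim_inr, Fin.val_natAdd,
      hindex]
    ring_nf
  rw [sum_congr rfl hpaired, sum_range_two_mul_pairedLabel]

lemma vertexSum_slotLabel_comp_edgeSlot (he : Even e)
    (hev : ∀ i : Fin (e + (2 * h + 1)), (i : ℕ) < e → Even (a i))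
    (hod : ∀ i : Fin (e + (2 * h + 1)), e ≤ (i : ℕ) → Odd (a i)) :
    vertexSum a (slotLabel h _ ∘ edgeSlot a) = vertexSlotLabel h _ ∘ vertexSlot a := by
  funext v
  rcases v with _ | i | ⟨i, r⟩
  · obtain ⟨e', rfl⟩ := he
    change ∑ i, slotLabel h _ (rootEdgeSlot a i) = 2 * h + 1
    rw [Fin.sum_univ_add]
    simp only [rootEdgeSlot, Fin.addCases_left, Fin.addCases_right, slotLabel, Sum.elim_inl,
      Sum.elim_inr, smallEdgeLabel, Fin.val_castAdd, sum_oddEdgeLabel]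
    rw [Fin.sum_univ_eq_sum_range (pairedLabel _), ← two_mul, sum_range_two_mul_pairedLabel,
      zero_add]
  · change slotLabel h _ (rootEdgeSlot a i) + ∑ r : Fin (a i), slotLabel h _ (leafSlot a i r) =
      vertexSlotLabel h _ (Sum.map some id (rootEdgeSlot a i))
    rw [Fin.sum_univ_eq_sum_range (fun r => slotLabel h _ (leafSlot a i r))]
    induction i using Fin.addCases with
    | left i =>
      rw [← Nat.two_mul_div_two_of_even (hev _ (by simp)), sum_slotLabel_leafSlot_eq_zero he]
      simp [rootEdgeSlot, slotLabel, vertexSlotLabel]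
    | right m =>
      rw [← Nat.two_mul_div_two_add_one_of_odd (hod _ (by simp)), sum_range_succ,
        sum_slotLabel_leafSlot_eq_zero he, leafSlot, dif_neg (lt_irrefl _)]
      simp [rootEdgeSlot, slotLabel, vertexSlotLabel, smallEdgeLabel, smallVertexLabel]
  · change slotLabel h _ (leafSlot a i r) = vertexSlotLabel h _ (Sum.map some id (leafSlot a i r))
    unfold leafSlot
    split_ifs <;> rfl

lemma rootEdgeSlot_injective : Injective (rootEdgeSlot a) := by
  intro i i'
  induction i using Fin.addCases <;> induction i' using Fin.addCases <;> simp [rootEdgeSlot]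

lemma leafSlot_injective (hev : ∀ i : Fin (e + (2 * h + 1)), (i : ℕ) < e → Even (a i)) :
    Injective fun x : Σ i, Fin (a i) => leafSlot a x.1 x.2 := by
  rintro ⟨i, r, hr⟩ ⟨i', r', hr'⟩ hslot
  simp only [leafSlot] at hslot
  split_ifs at hslot with hp hp'
  · obtain ⟨rfl, hrr⟩ := Sigma.mk.inj_iff.mp
      (finSigmaFinEquiv.injective (Fin.natAdd_injective _ _ (Sum.inr_injective hslot)))
    simpa [Fin.ext_iff] using hrr
  · have hi : e ≤ (i : ℕ) := by
      by_contra hi; have := Nat.even_iff.mp (hev i (by omega)); omega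
    have hi' : e ≤ (i' : ℕ) := by
      by_contra hi'; have := Nat.even_iff.mp (hev i' (by omega)); omega
    obtain rfl : i = i' := by simp [Fin.ext_iff] at hslot; omega
    simp only [Sigma.mk.injEq, heq_eq_eq, Fin.mk.injEq, true_and]
    omega

lemma rootEdgeSlot_ne_leafSlot (i i' : Fin (e + (2 * h + 1))) (r : ℕ) :
    rootEdgeSlot a i ≠ leafSlot a i' r := by
  induction i using Fin.addCases <;> unfold leafSlot <;> split_ifs <;>
    simp [rootEdgeSlot, Fin.ext_iff]; omega

lemma edgeSlot_injective (hev : ∀ i : Fin (e + (2 * h + 1)), (i : ℕ) < e → Even (a i)) :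
    Injective (edgeSlot a) :=
  rootEdgeSlot_injective.sumElim (leafSlot_injective hev)
    fun i x => rootEdgeSlot_ne_leafSlot i x.1 x.2

lemma vertexSlot_injective (hev : ∀ i : Fin (e + (2 * h + 1)), (i : ℕ) < e → Even (a i)) :
    Injective (vertexSlot a) := by
  have hsome : Injective (Sum.map some id ∘ edgeSlot a) :=
    (Option.some_injective _).sumMap injective_id |>.comp (edgeSlot_injective hev)
  rintro (_ | v) (_ | v') hv
  · rfl
  · cases hs : edgeSlot a v' <;> simp [vertexSlot, hs] at hv
  · cases hs : edgeSlot a v <;> simp [vertexSlot, hs] at hv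
  · exact congrArg some (hsome hv)

theorem isSEG_of_even_odd (he : Even e)
    (hev : ∀ i : Fin (e + (2 * h + 1)), (i : ℕ) < e → Even (a i))
    (hod : ∀ i : Fin (e + (2 * h + 1)), e ≤ (i : ℕ) → Odd (a i)) : IsSEG a := by
  have hq : e + (2 * h + 1) + ∑ i, a i = 2 * (2 * h + 1) + (e + pairedLeafCount a) := by
    rw [sum_eq_pairedLeafCount_add hev hod]; ring
  have hL : Even (e + pairedLeafCount a) := he.add (by simp [pairedLeafCount, ← mul_sum])
  refine ⟨slotLabel h _ ∘ edgeSlot a, ?_, ?_⟩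
  · refine bijOn_segSet_of_injective (by simp) ((slotLabel_injective h _).comp
      (edgeSlot_injective hev)) fun x => ?_
    rw [hq]; exact slotLabel_mem_segSet h hL _
  · rw [vertexSum_slotLabel_comp_edgeSlot he hev hod]
    refine bijOn_segSet_of_injective (by simp) ((vertexSlotLabel_injective h _).comp
      (vertexSlot_injective hev)) fun x => ?_
    rw [hq]; exact vertexSlotLabel_mem_segSet h hL _

end Tree

theorem stmt10_general (j k l : ℕ) (hj : Even j) (hk : Even k) (hl : Odd l)
    (a : Fin (j + k + l) → ℕ)
    (h0 : ∀ i : Fin (j + k + l), (i : ℕ) < j → a i = 0)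
    (hev : ∀ i : Fin (j + k + l), j ≤ (i : ℕ) → (i : ℕ) < j + k → 0 < a i ∧ Even (a i))
    (hod : ∀ i : Fin (j + k + l), j + k ≤ (i : ℕ) → 0 < a i ∧ Odd (a i)) :
    IsSEG a := by
  obtain ⟨h, rfl⟩ := hl
  refine isSEG_of_even_odd (hj.add hk) (fun i hi => ?_) (fun i hi => (hod i hi).2)
  rcases Nat.lt_or_ge (i : ℕ) j with hij | hij
  · simp [h0 i hij]
  · exact (hev i hij hi).2

/-- Let `j, k ≥ 0` be even, `l ≥ 1` odd, with `k + l ≥ 3`, `n = j + k + l`, and let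
`(a_1, …, a_n)` consist of `j` zeros, followed by `k` positive even entries in
nondecreasing order, followed by `l` positive odd entries in nondecreasing order.
Then `RT(a_1, …, a_n)` is super edge-graceful. -/
theorem stmt10 (j k l : ℕ) (hj : Even j) (hk : Even k) (hl : Odd l)
    (hl1 : 1 ≤ l) (hkl : 3 ≤ k + l)
    (a : Fin (j + k + l) → ℕ)
    (h0 : ∀ i : Fin (j + k + l), (i : ℕ) < j → a i = 0)
    (hev : ∀ i : Fin (j + k + l), j ≤ (i : ℕ) → (i : ℕ) < j + k → 0 < a i ∧ Even (a i))
    (hod : ∀ i : Fin (j + k + l), j + k ≤ (i : ℕ) → 0 < a i ∧ Odd (a i))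
    (hmono₁ : ∀ i₁ i₂ : Fin (j + k + l),
      j ≤ (i₁ : ℕ) → i₁ ≤ i₂ → (i₂ : ℕ) < j + k → a i₁ ≤ a i₂)
    (hmono₂ : ∀ i₁ i₂ : Fin (j + k + l),
      j + k ≤ (i₁ : ℕ) → i₁ ≤ i₂ → a i₁ ≤ a i₂) :
    IsSEG a :=
  stmt10_general j k l hj hk hl a h0 hev hod
end

section
/- For every odd integer j ≥ 1 and every integer l ≥ 3, the rooted tree RT(0^j, 1^l) is NOT super edge-graceful. -/
/-!
When `q` is odd, `0` is an edge label, but `p = q + 1` is even, so `0` is not a vertex label.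
If every child of the root has at most one leaf, the edge labelled `0` cannot exist: on a leaf
edge it makes the leaf's label `0`; on the edge to a childless vertex it makes that vertex's
label `0`; on the edge to a vertex with a single leaf it gives that vertex the same label as
its leaf.
-/

theorem zero_mem_segSet_of_odd {q : ℕ} (hq : Odd q) : (0 : ℤ) ∈ segSet q := by
  rw [segSet, if_neg (Nat.odd_iff.mp hq ▸ one_ne_zero)]
  simp only [Finset.mem_Icc, Left.neg_nonpos_iff, and_self]
  positivity

theorem zero_notMem_segSet_of_even {q : ℕ} (hq : Even q) : (0 : ℤ) ∉ segSet q := by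
  rw [segSet, if_pos (Nat.even_iff.mp hq)]
  exact Finset.notMem_erase 0 _

section vertexSum

variable {n : ℕ} {a : Fin n → ℕ} (f : RTEdge n a → ℤ) {i : Fin n}

theorem vertexSum_child_of_eq_zero (h : a i = 0) :
    vertexSum a f (some (.inl i)) = f (.inl i) := by
  have : IsEmpty (Fin (a i)) := by rw [h]; infer_instance
  simp [vertexSum]

theorem vertexSum_child_of_eq_one (h : a i = 1) :
    vertexSum a f (some (.inl i)) =
      f (.inl i) + vertexSum a f (some (.inr ⟨i, ⟨0, by omega⟩⟩)) := by
  have : Subsingleton (Fin (a i)) := Fin.subsingleton_iff_le_one.mpr h.le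
  simp only [vertexSum, Fintype.sum_subsingleton _ (⟨0, by omega⟩ : Fin (a i))]

end vertexSum

theorem not_isSEG_of_odd_of_le_one {n : ℕ} (a : Fin n → ℕ) (hq : Odd (n + ∑ i, a i))
    (ha : ∀ i, a i ≤ 1) : ¬ IsSEG a := by
  rintro ⟨f, hf, hg⟩
  obtain ⟨e, -, he⟩ := hf.surjOn (zero_mem_segSet_of_odd hq)
  have hv : ∀ v, vertexSum a f v ≠ 0 := fun v h0 =>
    zero_notMem_segSet_of_even (Nat.even_add_one.mpr (Nat.not_even_iff_odd.mpr hq))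
      (h0 ▸ hg.mapsTo (Set.mem_univ v))
  rcases e with i | ⟨i, m⟩
  · rcases Nat.le_one_iff_eq_zero_or_eq_one.mp (ha i) with h | h
    · exact hv _ ((vertexSum_child_of_eq_zero f h).trans he)
    · have hsame := (vertexSum_child_of_eq_one f h).trans (by rw [he, zero_add])
      simpa using hg.injOn (Set.mem_univ _) (Set.mem_univ _) hsame
  · exact hv (some (.inr ⟨i, m⟩)) he

theorem stmt16_general (j l : ℕ) (hj : Odd j) :
    ¬ IsSEG (fun i : Fin (j + l) => if (i : ℕ) < j then 0 else 1) := by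
  apply not_isSEG_of_odd_of_le_one
  · have hsum : ∑ i : Fin (j + l), (if (i : ℕ) < j then 0 else 1) = l := by
      simp [Fin.sum_univ_add]
    rw [hsum, add_assoc]
    exact hj.add_even ⟨l, rfl⟩
  · intro i
    split_ifs <;> omega

/-- For every odd integer `j ≥ 1` and every integer `l ≥ 3`, the rooted tree
`RT(0^j, 1^l)` is not super edge-graceful. -/
theorem stmt16 (j l : ℕ) (hj : Odd j) (hj1 : 1 ≤ j) (hl : 3 ≤ l) :
    ¬ IsSEG (fun i : Fin (j + l) => if (i : ℕ) < j then 0 else 1) :=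
  stmt16_general j l hj
end
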